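/- For |t| < 1, Σ_{n=0}^∞ M_n t^n = (1/(1-t)) · arcsinh((1-t)/(1+t)), where M_n = Σ_{k=0}^n (n choose k) · (2^k c_k)/k! and c_k = (d^k/dx^k) arcsinh(1/x) evaluated at x = 1. -/

import Mathlib

open Real

noncomputable def cCoeff (k : ℕ) : ℝ :=
  iteratedDeriv k (fun x : ℝ => Real.arsinh (1 / x)) 1

noncomputable def Mdiag (n : ℕ) : ℝ :=
  ∑ k ∈ Finset.range (n + 1),
    (n.choose k : ℝ) * (2 ^ k * cCoeff k) / (Nat.factorial k)

/-!
The function `f z = arsinh (1 / z)` extends holomorphically to `re z > 0` (principal branch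
`arsinh z = log (z + √(1 + z²))`), so `c k / k!` are the coefficients of its Taylor series
at `1`, which converges for `|u| < 1`. Since `M n` is the binomial transform of `2 ^ k c k / k!`,
summing the double series in the other order gives
`∑ M n t ^ n = (1 - t)⁻¹ f (1 + 2t / (1 - t)) = (1 - t)⁻¹ arsinh ((1 - t) / (1 + t))`
whenever it converges absolutely, i.e. for `|t| < 1/3`. The right-hand side is holomorphic on
the unit disc, so by uniqueness of power series the expansion persists up to `|t| < 1`.
-/

open Filter Topology Finset FormalMultilinearSeries Metric
open scoped NNReal ENNReal

section PowerSeries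

variable {𝕜 : Type*} [RCLike 𝕜] {c : ℕ → 𝕜} {f : 𝕜 → 𝕜} {r : ℝ≥0}

theorem hasFPowerSeriesOnBall_ofScalars_of_hasSum (hr : 0 < r)
    (hf : ∀ z ∈ ball (0 : 𝕜) r, HasSum (fun n => c n * z ^ n) (f z)) :
    HasFPowerSeriesOnBall f (ofScalars 𝕜 c) 0 r where
  r_le := by
    refine ENNReal.le_of_forall_nnreal_lt fun ρ hρ => le_radius_of_tendsto _ (l := 0) ?_
    have hz : ((ρ : ℝ) : 𝕜) ∈ ball (0 : 𝕜) r := by simpa using ENNReal.coe_lt_coe.mp hρ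
    simpa [ofScalars_norm] using (hf _ hz).summable.tendsto_atTop_zero.norm
  r_pos := ENNReal.coe_pos.mpr hr
  hasSum hz := by
    rw [eball_coe] at hz
    simpa [ofScalars_apply_eq, mul_comm] using hf _ hz

theorem summable_norm_mul_pow_of_hasSum
    (hf : ∀ z ∈ ball (0 : 𝕜) r, HasSum (fun n => c n * z ^ n) (f z)) {ρ : ℝ}
    (hρ0 : 0 ≤ ρ) (hρ : ρ < r) : Summable fun n => ‖c n‖ * ρ ^ n := by
  lift ρ to ℝ≥0 using hρ0
  replace hρ : ρ < r := mod_cast hρ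
  have := (hasFPowerSeriesOnBall_ofScalars_of_hasSum (pos_of_gt hρ) hf).r_le
  simpa [ofScalars_norm] using summable_norm_mul_pow _ ((ENNReal.coe_lt_coe.mpr hρ).trans_le this)

end PowerSeries

theorem HasSum.of_differentiableOn_ball {c : ℕ → ℂ} {f : ℂ → ℂ} {r R : ℝ≥0} (hr : 0 < r)
    (hc : ∀ z ∈ ball (0 : ℂ) r, HasSum (fun n => c n * z ^ n) (f z))
    (hf : DifferentiableOn ℂ f (ball 0 R)) {z : ℂ} (hz : z ∈ ball 0 R) :
    HasSum (fun n => c n * z ^ n) (f z) := by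
  have taylor := hasFPowerSeriesOnBall_ofScalars_of_hasSum
    (c := fun n => (n.factorial : ℂ)⁻¹ * iteratedDeriv n f 0) (pos_of_mem_ball hz)
    fun w hw => by simpa [mul_comm, mul_left_comm] using Complex.hasSum_taylorSeries_on_ball hf hw
  rw [← eball_coe] at hz
  simpa [ofScalars_apply_eq, mul_comm] using
    ((hasFPowerSeriesOnBall_ofScalars_of_hasSum hr hc).exchange_radius taylor).hasSum hz

theorem hasSum_choose_mul_pow {𝕜 : Type*} [NontriviallyNormedField 𝕜] (k : ℕ) {r : 𝕜}
    (hr : ‖r‖ < 1) :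
    HasSum (fun n => (n.choose k : 𝕜) * r ^ n) (r ^ k / (1 - r) ^ (k + 1)) := by
  have shifted :
      HasSum (fun n => ((n + k).choose k : 𝕜) * r ^ (n + k)) (r ^ k / (1 - r) ^ (k + 1)) := by
    have h := (hasSum_choose_mul_geometric_of_norm_lt_one k hr).mul_left (r ^ k)
    rw [mul_one_div] at h
    simpa only [pow_add, mul_assoc, mul_comm (r ^ k)] using h
  rw [← hasSum_nat_add_iff' k, sum_eq_zero fun i hi => by
    rw [Nat.choose_eq_zero_of_lt (mem_range.mp hi), Nat.cast_zero, zero_mul], sub_zero]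
  exact shifted

theorem HasSum.binomialTransform {𝕜 : Type*} [RCLike 𝕜] {a : ℕ → 𝕜} {t A : 𝕜}
    (ht : ‖t‖ < 1) (ha : Summable fun k => ‖a k‖ * (‖t‖ / (1 - ‖t‖)) ^ k)
    (hA : HasSum (fun k => a k * (t / (1 - t)) ^ k) A) :
    HasSum (fun n => (∑ k ∈ range (n + 1), (n.choose k : 𝕜) * a k) * t ^ n)
      ((1 - t)⁻¹ * A) := by
  have h1t : 1 - t ≠ 0 := sub_ne_zero.mpr fun h => by simp [← h] at ht
  set g : ℕ × ℕ → 𝕜 := fun p => (p.2.choose p.1 : 𝕜) * a p.1 * t ^ p.2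
  have hcol (k : ℕ) : HasSum (fun n => g (k, n)) (a k * (t ^ k / (1 - t) ^ (k + 1))) :=
    ((hasSum_choose_mul_pow k ht).mul_left (a k)).congr_fun fun n => by simp only [g]; ring
  have hcol_norm (k : ℕ) :
      HasSum (fun n => ‖g (k, n)‖) (‖a k‖ * (‖t‖ ^ k / (1 - ‖t‖) ^ (k + 1))) := by
    have hnorm : ‖(‖t‖)‖ < 1 := by rwa [norm_norm]
    exact ((hasSum_choose_mul_pow k hnorm).mul_left ‖a k‖).congr_fun fun n => by
      simp only [g, norm_mul, norm_pow, RCLike.norm_natCast]; ring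
  have hrow (n : ℕ) : HasSum (fun k => g (k, n))
      ((∑ k ∈ range (n + 1), (n.choose k : 𝕜) * a k) * t ^ n) := by
    rw [sum_mul]
    exact hasSum_sum_of_ne_finset_zero fun k hk => by
      simp [g, Nat.choose_eq_zero_of_lt (by simpa using hk : n < k)]
  have hg : Summable g := by
    refine Summable.of_norm ((summable_prod_of_nonneg fun _ => norm_nonneg _).mpr ?_)
    refine ⟨fun k => (hcol_norm k).summable, ?_⟩
    simp only [(hcol_norm _).tsum_eq]
    exact (ha.mul_left (1 - ‖t‖)⁻¹).congr fun k => by rw [div_pow]; field_simp; ring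
  have hA' : HasSum (fun k => a k * (t ^ k / (1 - t) ^ (k + 1))) ((1 - t)⁻¹ * A) :=
    (hA.mul_left _).congr_fun fun k => by rw [div_pow]; field_simp; ring
  have hsum : HasSum g ((1 - t)⁻¹ * A) :=
    (hg.hasSum.prod_fiberwise hcol).unique hA' ▸ hg.hasSum
  exact ((Equiv.prodComm ℕ ℕ).hasSum_iff.mpr hsum).prod_fiberwise hrow

theorem deriv_ofReal_comp (f : ℝ → ℝ) (x : ℝ) :
    deriv (fun y => (f y : ℂ)) x = deriv f x := by
  by_cases hf : DifferentiableAt ℝ f x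
  · exact hf.hasDerivAt.ofReal_comp.deriv
  · have hf' : ¬DifferentiableAt ℝ (fun y => (f y : ℂ)) x := fun h => by
      have := Complex.reCLM.differentiableAt.comp x h
      simp only [Function.comp_def, Complex.reCLM_apply, Complex.ofReal_re] at this
      exact hf this
    simp [deriv_zero_of_not_differentiableAt hf, deriv_zero_of_not_differentiableAt hf']

theorem iteratedDeriv_ofReal_comp (f : ℝ → ℝ) (k : ℕ) :
    iteratedDeriv k (fun y => (f y : ℂ)) = fun y => ((iteratedDeriv k f y : ℝ) : ℂ) := by
  induction k with
  | zero => simp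
  | succ k ih =>
    funext x
    rw [iteratedDeriv_succ, ih, iteratedDeriv_succ, deriv_ofReal_comp]

theorem iteratedDeriv_comp_ofReal {f : ℂ → ℂ} {U : Set ℂ} (hU : IsOpen U)
    (hf : AnalyticOnNhd ℂ f U) (k : ℕ) {x : ℝ} (hx : (x : ℂ) ∈ U) :
    iteratedDeriv k (fun y : ℝ => f y) x = iteratedDeriv k f x := by
  induction k generalizing x with
  | zero => simp
  | succ k ih =>
    have heq : iteratedDeriv k (fun y : ℝ => f y) =ᶠ[𝓝 x] fun y => iteratedDeriv k f y :=
      eventually_of_mem ((hU.preimage Complex.continuous_ofReal).mem_nhds hx) fun y hy => ih hy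
    have hdiff : DifferentiableAt ℂ (iteratedDeriv k f) x := by
      rw [iteratedDeriv_eq_iterate]
      exact (hf.iterated_deriv k _ hx).differentiableAt
    rw [iteratedDeriv_succ, iteratedDeriv_succ, heq.deriv_eq]
    exact hdiff.hasDerivAt.comp_ofReal.deriv

namespace Complex

noncomputable def arsinh (z : ℂ) : ℂ := log (z + (1 + z ^ 2) ^ (1 / 2 : ℂ))

theorem arsinh_ofReal (x : ℝ) : arsinh x = Real.arsinh x := by
  have hsqrt : (1 + (x : ℂ) ^ 2) ^ (1 / 2 : ℂ) = (√(1 + x ^ 2) : ℝ) := by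
    rw [Real.sqrt_eq_rpow, ofReal_cpow (by positivity)]
    push_cast
    rfl
  rw [arsinh, hsqrt, ← ofReal_add, ← Real.exp_arsinh, ← ofReal_log (Real.exp_pos _).le,
    Real.log_exp]

theorem one_add_sq_mem_slitPlane {z : ℂ} (hz : 0 < z.re) : 1 + z ^ 2 ∈ slitPlane := by
  rcases eq_or_ne z.im 0 with him | him
  · left
    simp only [add_re, one_re, sq, mul_re, him, mul_zero, sub_zero]
    positivity
  · right
    simp only [add_im, one_im, sq, mul_im, zero_add]
    rw [mul_comm z.im, ← two_mul]
    exact mul_ne_zero two_ne_zero (mul_ne_zero hz.ne' him)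

theorem re_cpow_one_half_pos {w : ℂ} (hw : w ∈ slitPlane) : 0 < (w ^ (1 / 2 : ℂ)).re := by
  rw [cpow_def_of_ne_zero (slitPlane_ne_zero hw), exp_re]
  refine mul_pos (Real.exp_pos _) (Real.cos_pos_of_mem_Ioo ⟨?_, ?_⟩)
  all_goals
    have : (log w * (1 / 2)).im = w.arg / 2 := by simp [log_im, div_eq_mul_inv]
    rw [this]
  · linarith [neg_pi_lt_arg w]
  · linarith [(arg_le_pi w).lt_of_ne (slitPlane_arg_ne_pi hw)]

theorem analyticAt_arsinh {z : ℂ} (hz : 0 < z.re) : AnalyticAt ℂ arsinh z := by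
  have hslit := one_add_sq_mem_slitPlane hz
  refine AnalyticAt.clog ?_ (Or.inl ?_)
  · fun_prop (disch := exact hslit)
  · simpa using add_pos hz (re_cpow_one_half_pos hslit)

theorem re_one_sub_div_one_add_pos {z : ℂ} (hz : ‖z‖ < 1) : 0 < ((1 - z) / (1 + z)).re := by
  have h1z : 1 + z ≠ 0 := fun h => by simp [eq_neg_of_add_eq_zero_right h] at hz
  have hsq : normSq z < 1 := by rw [normSq_eq_norm_sq]; nlinarith [norm_nonneg z]
  rw [normSq_apply] at hsq
  rw [div_re, ← add_div]
  refine div_pos ?_ (normSq_pos.mpr h1z)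
  simp only [sub_re, add_re, one_re, sub_im, add_im, one_im]
  nlinarith

end Complex

theorem analyticOnNhd_arsinh_inv :
    AnalyticOnNhd ℂ (fun z => Complex.arsinh z⁻¹) {z | 0 < z.re} := fun z hz => by
  have hz0 : z ≠ 0 := fun h => by simp [h] at hz
  refine (Complex.analyticAt_arsinh ?_).comp (analyticAt_inv hz0)
  rw [Complex.inv_re]
  exact div_pos hz (Complex.normSq_pos.mpr hz0)

theorem ofReal_cCoeff (k : ℕ) :
    (cCoeff k : ℂ) = iteratedDeriv k (fun z => Complex.arsinh z⁻¹) 1 := by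
  have hreal :
      (fun y : ℝ => Complex.arsinh (y : ℂ)⁻¹) = fun y => ((Real.arsinh (1 / y) : ℝ) : ℂ) := by
    funext y
    rw [← Complex.ofReal_inv, Complex.arsinh_ofReal, one_div]
  rw [cCoeff, ← Complex.ofReal_one, ← iteratedDeriv_comp_ofReal
    (isOpen_lt continuous_const Complex.continuous_re) analyticOnNhd_arsinh_inv k (by simp), hreal,
    iteratedDeriv_ofReal_comp]

theorem hasSum_cCoeff_div_factorial_mul_pow {u : ℂ} (hu : ‖u‖ < 1) :
    HasSum (fun k => (cCoeff k / k.factorial : ℂ) * u ^ k) (Complex.arsinh (1 + u)⁻¹) := by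
  have hball : ball (1 : ℂ) 1 ⊆ {z | 0 < z.re} := fun z hz => by
    have := (Complex.abs_re_le_norm (z - 1)).trans_lt (mem_ball_iff_norm.mp hz)
    simp only [Complex.sub_re, Complex.one_re] at this
    exact show 0 < z.re by linarith [abs_lt.mp this]
  have := Complex.hasSum_taylorSeries_on_ball
    (analyticOnNhd_arsinh_inv.mono hball).differentiableOn (z := 1 + u) (by simpa using hu)
  simpa [ofReal_cCoeff, div_eq_inv_mul, mul_comm, mul_left_comm] using this

theorem ofReal_Mdiag (n : ℕ) :
    (Mdiag n : ℂ) =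
      ∑ k ∈ range (n + 1), (n.choose k : ℂ) * (2 ^ k * (cCoeff k / k.factorial)) := by
  simp only [Mdiag, Complex.ofReal_sum, Complex.ofReal_div, Complex.ofReal_mul,
    Complex.ofReal_pow, Complex.ofReal_natCast, Complex.ofReal_ofNat, mul_div_assoc]

theorem hasSum_Mdiag_mul_pow_of_norm_lt {z : ℂ} (hz : ‖z‖ < 1 / 3) :
    HasSum (fun n => (Mdiag n : ℂ) * z ^ n)
      ((1 - z)⁻¹ * Complex.arsinh ((1 - z) / (1 + z))) := by
  have hz1 : ‖z‖ < 1 := by linarith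
  have hpos : 0 < 1 - ‖z‖ := by linarith
  have h1z : 1 - z ≠ 0 := fun h => by simp [(sub_eq_zero.mp h).symm] at hz1
  set ρ := 2 * ‖z‖ / (1 - ‖z‖)
  have hρ : ρ < 1 := by rw [div_lt_one hpos]; linarith
  have hu : ‖2 * z / (1 - z)‖ < 1 := calc
    ‖2 * z / (1 - z)‖ = 2 * ‖z‖ / ‖1 - z‖ := by simp
    _ ≤ ρ := div_le_div_of_nonneg_left (by positivity) hpos
      (by simpa using norm_sub_norm_le 1 z)
    _ < 1 := hρ
  have ha :
      Summable fun k => ‖(2 : ℂ) ^ k * (cCoeff k / k.factorial)‖ * (‖z‖ / (1 - ‖z‖)) ^ k :=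
    (summable_norm_mul_pow_of_hasSum (r := 1) (f := fun w => Complex.arsinh (1 + w)⁻¹)
      (fun w hw => hasSum_cCoeff_div_factorial_mul_pow (by simpa using hw)) (ρ := ρ)
      (div_nonneg (by positivity) hpos.le) (by simpa using hρ)).congr
      fun k => by simp only [ρ, norm_mul, norm_pow, div_pow, mul_pow]; norm_num; ring
  have hA : HasSum (fun k => (2 : ℂ) ^ k * (cCoeff k / k.factorial) * (z / (1 - z)) ^ k)
      (Complex.arsinh (1 + 2 * z / (1 - z))⁻¹) :=
    (hasSum_cCoeff_div_factorial_mul_pow hu).congr_fun fun k => by ring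
  have hmob : (1 + 2 * z / (1 - z))⁻¹ = (1 - z) / (1 + z) := by
    rw [← inv_div]
    field_simp
    ring
  simpa only [hmob, ← ofReal_Mdiag] using HasSum.binomialTransform hz1 ha hA

theorem differentiableOn_one_sub_inv_mul_arsinh :
    DifferentiableOn ℂ (fun z : ℂ => (1 - z)⁻¹ * Complex.arsinh ((1 - z) / (1 + z)))
      (ball 0 1) := by
  intro z hz
  rw [mem_ball_zero_iff] at hz
  have h1z : 1 - z ≠ 0 := fun h => by simp [(sub_eq_zero.mp h).symm] at hz
  have h1z' : 1 + z ≠ 0 := fun h => by simp [eq_neg_of_add_eq_zero_right h] at hz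
  have := Complex.analyticAt_arsinh (Complex.re_one_sub_div_one_add_pos hz)
  have hmob : AnalyticAt ℂ (fun w : ℂ => (1 - w) / (1 + w)) z := by
    fun_prop (disch := assumption)
  have hF := ((analyticAt_const.sub analyticAt_id).inv h1z).mul
    (this.comp (f := fun w : ℂ => (1 - w) / (1 + w)) hmob)
  exact hF.differentiableAt.differentiableWithinAt

theorem Mdiag_generating_function (t : ℝ) (ht : |t| < 1) :
    HasSum (fun n => Mdiag n * t ^ n)
      ((1 / (1 - t)) * Real.arsinh ((1 - t) / (1 + t))) := by
  have hC := HasSum.of_differentiableOn_ball (r := 1 / 3) (R := 1) (by norm_num)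
    (fun z hz => hasSum_Mdiag_mul_pow_of_norm_lt (by simpa using hz))
    differentiableOn_one_sub_inv_mul_arsinh (z := t) (by simpa using ht)
  rw [← Complex.hasSum_ofReal]
  convert hC using 1
  · push_cast; rfl
  · push_cast [one_div, ← Complex.arsinh_ofReal]
    rfl
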